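/- Let x, y, z be elements of the graph group G_F. If xy = x·y (i.e., |xy| = |x| + |y|) and yz = y·z (i.e., |yz| = |y| + |z|), then y is a segment of xyz. -/

import Mathlib

/-!
A word has a *cancelling pair* if it contains a letter `α` and later `α⁻¹` with everything in
between commuting with `α`. Words without one are geodesic: `G_F` acts on pilings (heaps of
pieces), the piling of such a word is what the word builds from the empty piling, and a
piling remembers the length of the word that built it.

If `|xyz| < |x| + |y| + |z|`, the concatenation of minimal words of `x`, `y`, `z` has a
cancelling pair; since `xy = x·y` and `yz = y·z` it must take `α` from `x` and `α⁻¹` from `z`,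
with `α` commuting with `y`. Then `xα⁻¹ · y · αz` is the same element, both hypotheses still
hold, and `|x| + |z|` has dropped, so induction on `|x| + |z|` concludes.
-/

open Pointwise

namespace GraphGroupPaper

/-- The set of commutator relators: `gᵢ` and `gⱼ` commute for every pair of distinct
`i, j` with `{i,j} ∉ F`. -/
def Rels (k : ℕ) (F : Set (Sym2 (Fin k))) : Set (FreeGroup (Fin k)) :=
  {w | ∃ i j : Fin k, i ≠ j ∧ s(i, j) ∉ F ∧
      w = FreeGroup.of i * FreeGroup.of j * (FreeGroup.of i)⁻¹ * (FreeGroup.of j)⁻¹}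

/-- The graph group `G_F` with generators `g₁, …, g_k` and relations `gᵢgⱼ = gⱼgᵢ`
for all distinct `i, j` with `{i,j} ∉ F`. -/
abbrev Grp (k : ℕ) (F : Set (Sym2 (Fin k))) := PresentedGroup (Rels k F)

/-- The generator `gᵢ` of the graph group. -/
def gen (k : ℕ) (F : Set (Sym2 (Fin k))) (i : Fin k) : Grp k F :=
  PresentedGroup.of i

/-- The group element corresponding to a symbol: `(i, true)` stands for `gᵢ`,
`(i, false)` stands for `gᵢ⁻¹`. -/
def sym (k : ℕ) (F : Set (Sym2 (Fin k))) (α : Fin k × Bool) : Grp k F :=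
  if α.2 then gen k F α.1 else (gen k F α.1)⁻¹

/-- The product of the word `l` of symbols, as an element of the graph group. -/
def wordProd (k : ℕ) (F : Set (Sym2 (Fin k))) (l : List (Fin k × Bool)) : Grp k F :=
  (l.map (sym k F)).prod

/-- `|x|` : the length of a shortest word in the symbols representing `x`. -/
noncomputable def len {k : ℕ} {F : Set (Sym2 (Fin k))} (x : Grp k F) : ℕ :=
  sInf {n | ∃ l : List (Fin k × Bool), wordProd k F l = x ∧ l.length = n}

/-- The partial order on `G_F`:  `x ≤ y` iff `|y| = |x| + |x⁻¹y|`. -/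
def le {k : ℕ} {F : Set (Sym2 (Fin k))} (x y : Grp k F) : Prop :=
  len y = len x + len (x⁻¹ * y)

/-- `m` is the meet `x ∧ y` (greatest lower bound w.r.t. `le`). -/
def IsMeet {k : ℕ} {F : Set (Sym2 (Fin k))} (x y m : Grp k F) : Prop :=
  le m x ∧ le m y ∧ ∀ w, le w x → le w y → le w m

/-- `j` is the (finite) join `x ∨ y` (least upper bound w.r.t. `le`);
`x ∨ y` is finite iff such a `j` exists. -/
def IsJoin {k : ℕ} {F : Set (Sym2 (Fin k))} (x y j : Grp k F) : Prop :=
  le x j ∧ le y j ∧ ∀ w, le x w → le y w → le j w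

/-- `j` is the (finite) join of the set `S`. -/
def IsJoinSet {k : ℕ} {F : Set (Sym2 (Fin k))} (S : Set (Grp k F)) (j : Grp k F) : Prop :=
  (∀ s ∈ S, le s j) ∧ ∀ w, (∀ s ∈ S, le s w) → le j w

/-- `y` is a segment of `a` if `a = x·y·z` for some `x, z`. -/
def Segment {k : ℕ} {F : Set (Sym2 (Fin k))} (y a : Grp k F) : Prop :=
  ∃ x z, a = x * y * z ∧ len a = len x + len y + len z

/-- The left-invariant metric `dist(x,y) = |x⁻¹y|`. -/
noncomputable def dist {k : ℕ} {F : Set (Sym2 (Fin k))} (x y : Grp k F) : ℕ :=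
  len (x⁻¹ * y)

/-- A nonempty set `L` is convex if `x, z ∈ L` and `dist(x,y) + dist(y,z) = dist(x,z)`
imply `y ∈ L`. -/
def ConvexSet {k : ℕ} {F : Set (Sym2 (Fin k))} (L : Set (Grp k F)) : Prop :=
  L.Nonempty ∧ ∀ x z y : Grp k F, x ∈ L → z ∈ L →
    dist x y + dist y z = dist x z → y ∈ L

/-- An ideal: nonempty, downward closed, and closed under finite joins. -/
def IdealSet {k : ℕ} {F : Set (Sym2 (Fin k))} (I : Set (Grp k F)) : Prop :=
  I.Nonempty ∧ (∀ x ∈ I, ∀ y, le y x → y ∈ I) ∧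
    (∀ x ∈ I, ∀ y ∈ I, ∀ j, IsJoin x y j → j ∈ I)

/-- `H` is closed if both `H` and `H⁻¹` are ideals. -/
def ClosedSet {k : ℕ} {F : Set (Sym2 (Fin k))} (H : Set (Grp k F)) : Prop :=
  IdealSet H ∧ IdealSet H⁻¹

/-- `m` is a minimal element of `S` w.r.t. `le`. -/
def MinimalIn {k : ℕ} {F : Set (Sym2 (Fin k))} (S : Set (Grp k F)) (m : Grp k F) : Prop :=
  m ∈ S ∧ ∀ x ∈ S, le x m → x = m

/-- `l` is a reduced (i.e. shortest) word representing `x`. -/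
def MinWord {k : ℕ} {F : Set (Sym2 (Fin k))} (x : Grp k F) (l : List (Fin k × Bool)) : Prop :=
  wordProd k F l = x ∧ l.length = len x

open Classical in
/-- `#_α(x)`: the number of occurrences of the symbol `α` (not counting `α⁻¹`)
in a reduced word representing `x`. -/
noncomputable def symCount {k : ℕ} {F : Set (Sym2 (Fin k))} (α : Fin k × Bool)
    (x : Grp k F) : ℕ :=
  if h : ∃ l, MinWord x l then h.choose.count α else 0

/-- The symbol `α` occurs in `x`. -/
def Occurs {k : ℕ} {F : Set (Sym2 (Fin k))} (α : Fin k × Bool) (x : Grp k F) : Prop :=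
  0 < symCount α x

/-- `α` is a maximal symbol of `x`, i.e. `xα⁻¹ ≤ x`. -/
def MaxSym {k : ℕ} {F : Set (Sym2 (Fin k))} (α : Fin k × Bool) (x : Grp k F) : Prop :=
  le (x * (sym k F α)⁻¹) x

/-- A peak: an element with precisely one maximal symbol. -/
def IsPeak {k : ℕ} {F : Set (Sym2 (Fin k))} (p : Grp k F) : Prop :=
  ∃! α : Fin k × Bool, MaxSym α p

/-- An `α`-peak: a peak whose unique maximal symbol is `α`. -/
def AlphaPeak {k : ℕ} {F : Set (Sym2 (Fin k))} (α : Fin k × Bool) (p : Grp k F) : Prop :=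
  MaxSym α p ∧ ∀ β, MaxSym β p → β = α

/-- The set of generator indices occurring in `b`. -/
def Support {k : ℕ} {F : Set (Sym2 (Fin k))} (b : Grp k F) : Set (Fin k) :=
  {i | Occurs (i, true) b ∨ Occurs (i, false) b}

/-- `b` is connected: the generators occurring in `b` induce a connected subgraph of
the graph `([k], F)`. -/
def Conn {k : ℕ} {F : Set (Sym2 (Fin k))} (b : Grp k F) : Prop :=
  (SimpleGraph.induce (Support b) (SimpleGraph.fromEdgeSet F)).Connected

/-- `b` is cyclically reduced: `b ∧ b⁻¹ = 1`. -/
def CycRed {k : ℕ} {F : Set (Sym2 (Fin k))} (b : Grp k F) : Prop :=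
  IsMeet b b⁻¹ 1

abbrev Letter (k : ℕ) := Fin k × Bool

section Words

variable {k : ℕ} {F : Set (Sym2 (Fin k))}

def Dep (F : Set (Sym2 (Fin k))) (i j : Fin k) : Prop := i = j ∨ s(i, j) ∈ F

lemma Dep.refl (i : Fin k) : Dep F i i := Or.inl rfl

lemma Dep.symm {i j : Fin k} (h : Dep F i j) : Dep F j i := by
  rcases h with h | h
  · exact Or.inl h.symm
  · exact Or.inr (by rwa [Sym2.eq_swap])

def letterInv (α : Letter k) : Letter k := (α.1, !α.2)

@[simp] lemma letterInv_fst (α : Letter k) : (letterInv α).1 = α.1 := rfl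

@[simp] lemma letterInv_snd (α : Letter k) : (letterInv α).2 = !α.2 := rfl

@[simp] lemma letterInv_letterInv (α : Letter k) : letterInv (letterInv α) = α := by
  simp [letterInv]

@[simp] lemma wordProd_nil : wordProd k F [] = 1 := rfl

@[simp] lemma wordProd_cons (α : Letter k) (l : List (Letter k)) :
    wordProd k F (α :: l) = sym k F α * wordProd k F l := by
  simp [wordProd]

@[simp] lemma wordProd_append (l₁ l₂ : List (Letter k)) :
    wordProd k F (l₁ ++ l₂) = wordProd k F l₁ * wordProd k F l₂ := by
  simp [wordProd]

@[simp] lemma sym_letterInv (α : Letter k) : sym k F (letterInv α) = (sym k F α)⁻¹ := by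
  rcases α with ⟨i, _ | _⟩ <;> simp [sym, letterInv]

lemma commute_gen {i j : Fin k} (h : ¬ Dep F i j) : Commute (gen k F i) (gen k F j) := by
  simp only [Dep, not_or] at h
  have hrel : PresentedGroup.mk (Rels k F)
      (FreeGroup.of i * FreeGroup.of j * (FreeGroup.of i)⁻¹ * (FreeGroup.of j)⁻¹) = 1 :=
    (QuotientGroup.eq_one_iff _).mpr (Subgroup.subset_normalClosure ⟨i, j, h.1, h.2, rfl⟩)
  simpa [gen, PresentedGroup.of, commutatorElement_def] using
    commutatorElement_eq_one_iff_commute.mp hrel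

lemma commute_sym {α β : Letter k} (h : ¬ Dep F α.1 β.1) :
    Commute (sym k F α) (sym k F β) := by
  have hg := commute_gen h
  rcases α with ⟨i, _ | _⟩ <;> rcases β with ⟨j, _ | _⟩ <;>
    simp [sym, hg, hg.inv_left, hg.inv_right, hg.inv_inv]

lemma commute_sym_wordProd {α : Letter k} {l : List (Letter k)}
    (h : ∀ β ∈ l, ¬ Dep F α.1 β.1) : Commute (sym k F α) (wordProd k F l) := by
  induction l with
  | nil => exact Commute.one_right _
  | cons β l ih =>
    simp only [List.forall_mem_cons] at h
    simpa using (commute_sym h.1).mul_right (ih h.2)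

lemma wordProd_eq_mk (l : List (Letter k)) :
    wordProd k F l = PresentedGroup.mk (Rels k F) (FreeGroup.mk l) := by
  have hmk : PresentedGroup.mk (Rels k F) = FreeGroup.lift (gen k F) :=
    FreeGroup.ext_hom _ _ fun i => by simp [gen, PresentedGroup.of]
  rw [hmk, FreeGroup.lift_mk, wordProd]
  congr 1
  refine List.map_congr_left fun α _ => ?_
  rcases α with ⟨i, _ | _⟩ <;> rfl

lemma exists_wordProd_eq (g : Grp k F) : ∃ l, wordProd k F l = g := by
  obtain ⟨w, rfl⟩ := PresentedGroup.mk_surjective (Rels k F) g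
  exact ⟨w.toWord, by rw [wordProd_eq_mk, FreeGroup.mk_toWord]⟩

lemma len_le_length {l : List (Letter k)} {g : Grp k F} (h : wordProd k F l = g) :
    len g ≤ l.length :=
  Nat.sInf_le ⟨l, h, rfl⟩

lemma exists_minWord (g : Grp k F) : ∃ l, MinWord g l := by
  obtain ⟨l, hl⟩ := exists_wordProd_eq g
  exact Nat.sInf_mem (s := {n | ∃ l : List (Letter k), wordProd k F l = g ∧ l.length = n})
    ⟨l.length, l, hl, rfl⟩

lemma len_mul_le (a b : Grp k F) : len (a * b) ≤ len a + len b := by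
  obtain ⟨la, hla, hna⟩ := exists_minWord a
  obtain ⟨lb, hlb, hnb⟩ := exists_minWord b
  simpa [← hna, ← hnb] using len_le_length (l := la ++ lb) (by simp [hla, hlb])

lemma len_sym_le_one (α : Letter k) : len (sym k F α) ≤ 1 :=
  len_le_length (l := [α]) (by simp)

end Words

section Cancellation

variable {k : ℕ} {F : Set (Sym2 (Fin k))}

def HasCancellingPair (F : Set (Sym2 (Fin k))) (u : List (Letter k)) : Prop :=
  ∃ a α b c, (∀ β ∈ b, ¬ Dep F α.1 β.1) ∧ u = a ++ α :: (b ++ letterInv α :: c)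

lemma wordProd_cancel {a b c : List (Letter k)} {α : Letter k}
    (hb : ∀ β ∈ b, ¬ Dep F α.1 β.1) :
    wordProd k F (a ++ α :: (b ++ letterInv α :: c)) = wordProd k F (a ++ (b ++ c)) := by
  simp [← mul_assoc, (commute_sym_wordProd hb).eq]

lemma HasCancellingPair.len_add_two_le {u : List (Letter k)} (h : HasCancellingPair F u) :
    len (wordProd k F u) + 2 ≤ u.length := by
  obtain ⟨a, α, b, c, hb, rfl⟩ := h
  have := len_le_length (wordProd_cancel (F := F) (a := a) (c := c) hb).symm
  simp only [List.length_append, List.length_cons] at this ⊢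
  omega

lemma MinWord.not_hasCancellingPair {g : Grp k F} {u : List (Letter k)} (h : MinWord g u) :
    ¬ HasCancellingPair F u := fun hc => by
  have := hc.len_add_two_le
  rw [h.1, h.2] at this
  omega

lemma HasCancellingPair.append_left {v : List (Letter k)} (h : HasCancellingPair F v)
    (u : List (Letter k)) : HasCancellingPair F (u ++ v) := by
  obtain ⟨a, α, b, c, hb, rfl⟩ := h
  exact ⟨u ++ a, α, b, c, hb, by simp⟩

lemma HasCancellingPair.of_append {u v : List (Letter k)} (h : HasCancellingPair F (u ++ v)) :
    HasCancellingPair F u ∨ HasCancellingPair F v ∨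
      ∃ u₁ γ u₂ v₁ v₂, u = u₁ ++ γ :: u₂ ∧ v = v₁ ++ letterInv γ :: v₂ ∧
        ∀ β ∈ u₂ ++ v₁, ¬ Dep F γ.1 β.1 := by
  obtain ⟨a, γ, b, c, hb, heq⟩ := h
  rcases List.append_eq_append_iff.mp heq with ⟨a', rfl, rfl⟩ | ⟨bs, rfl, hbs⟩
  · exact Or.inr (Or.inl ⟨a', γ, b, c, hb, rfl⟩)
  rcases List.cons_eq_append_iff.mp hbs with ⟨rfl, rfl⟩ | ⟨bs', rfl, hbs'⟩
  · exact Or.inr (Or.inl ⟨[], γ, b, c, hb, rfl⟩)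
  rcases List.append_eq_append_iff.mp hbs' with ⟨cs, rfl, hcs⟩ | ⟨cs, rfl, rfl⟩
  · rcases List.cons_eq_append_iff.mp hcs with ⟨rfl, rfl⟩ | ⟨cs', rfl, rfl⟩
    · exact Or.inr (Or.inr ⟨a, γ, b, [], c, by simp, rfl, by simpa using hb⟩)
    · exact Or.inl ⟨a, γ, b, cs', hb, by simp⟩
  · exact Or.inr (Or.inr ⟨a, γ, bs', cs, c, rfl, rfl, hb⟩)

end Cancellation

section Piling

variable {k : ℕ} {F : Set (Sym2 (Fin k))}

/-- A piling (a heap of pieces in Viennot's sense) has one column per generator `gᵢ`, read from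
the top: `some b` stands for a letter `(i, b)` and `none` for a letter `(j, _)`, `j ≠ i`, that
does not commute with `gᵢ`. -/
abbrev Piling (k : ℕ) := Fin k → List (Option Bool)

open Classical in
noncomputable def entry (F : Set (Sym2 (Fin k))) (i : Fin k) (β : Letter k) :
    Option (Option Bool) :=
  if β.1 = i then some (some β.2) else if Dep F β.1 i then some none else none

noncomputable def piling (F : Set (Sym2 (Fin k))) (u : List (Letter k)) : Piling k :=
  fun i => u.filterMap (entry F i)

def CanPop (α : Letter k) (p : Piling k) : Prop :=
  (p α.1).head? = some (some !α.2)

open Classical in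
/-- Left multiplication by the letter `α`: cancel a top letter `α⁻¹` if there is one, otherwise
place `α` on top. -/
noncomputable def push (F : Set (Sym2 (Fin k))) (α : Letter k) (p : Piling k) : Piling k :=
  if CanPop α p then fun j => if Dep F α.1 j then (p j).tail else p j
  else fun j => (entry F j α).toList ++ p j

lemma entry_of_eq {i : Fin k} {β : Letter k} (h : β.1 = i) :
    entry F i β = some (some β.2) := by
  simp [entry, h]

lemma entry_of_ne {i : Fin k} {β : Letter k} (hne : β.1 ≠ i) (hd : Dep F β.1 i) :
    entry F i β = some none := by
  simp [entry, hne, hd]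

lemma entry_eq_none_iff {i : Fin k} {β : Letter k} : entry F i β = none ↔ ¬ Dep F β.1 i := by
  unfold entry
  by_cases h : β.1 = i
  · simp [h, Dep.refl]
  · by_cases hd : Dep F β.1 i <;> simp [h, hd]

lemma eq_of_entry_eq_some_some {i : Fin k} {β : Letter k} {σ : Bool}
    (h : entry F i β = some (some σ)) : β = (i, σ) := by
  unfold entry at h
  split_ifs at h with h₁ <;> cases h
  exact Prod.ext h₁ rfl

lemma countP_isSome_entry (i : Fin k) (β : Letter k) :
    (entry F i β).toList.countP Option.isSome = if β.1 = i then 1 else 0 := by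
  unfold entry
  split_ifs <;> simp

@[simp] lemma piling_nil (i : Fin k) : piling F [] i = [] := rfl

@[simp] lemma piling_cons (α : Letter k) (u : List (Letter k)) (i : Fin k) :
    piling F (α :: u) i = (entry F i α).toList ++ piling F u i := by
  cases h : entry F i α <;> simp [piling, h]

@[simp] lemma piling_append (u v : List (Letter k)) (i : Fin k) :
    piling F (u ++ v) i = piling F u i ++ piling F v i := by
  simp [piling]

lemma piling_eq_nil {a : List (Letter k)} {i : Fin k} (h : ∀ γ ∈ a, ¬ Dep F γ.1 i) :
    piling F a i = [] :=
  List.filterMap_eq_nil_iff.mpr fun γ hγ => entry_eq_none_iff.mpr (h γ hγ)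

lemma piling_eq_replicate {a : List (Letter k)} {i : Fin k} (h : ∀ γ ∈ a, γ.1 ≠ i) :
    piling F a i = List.replicate (piling F a i).length none := by
  refine List.eq_replicate_iff.mpr ⟨rfl, fun x hx => ?_⟩
  obtain ⟨γ, hγ, hx⟩ := List.mem_filterMap.mp hx
  unfold entry at hx
  split_ifs at hx with h₁
  · exact absurd h₁ (h γ hγ)
  · exact (Option.some_injective _ hx).symm

lemma piling_append_cons {a c : List (Letter k)} {α : Letter k}
    (ha : ∀ γ ∈ a, ¬ Dep F α.1 γ.1) :
    piling F (a ++ α :: c) = piling F (α :: (a ++ c)) := by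
  funext j
  simp only [piling_append, piling_cons]
  by_cases hj : Dep F α.1 j
  · by_cases hjα : α.1 = j
    · subst hjα
      simp [piling_eq_nil fun γ hγ => mt Dep.symm (ha γ hγ)]
    · have hne : ∀ γ ∈ a, γ.1 ≠ j := fun γ hγ h => ha γ hγ (h ▸ hj)
      rw [entry_of_ne hjα hj, piling_eq_replicate hne]
      simp only [Option.toList_some, List.singleton_append]
      rw [← List.singleton_append, ← List.append_assoc, ← List.replicate_succ',
        List.replicate_succ, List.cons_append]
  · simp [entry_eq_none_iff.mpr hj]

lemma canPop_piling_letterInv_cons (α : Letter k) (w : List (Letter k)) :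
    CanPop α (piling F (letterInv α :: w)) := by
  simp [CanPop, entry_of_eq (letterInv_fst α)]

lemma push_piling_letterInv_cons (α : Letter k) (w : List (Letter k)) :
    push F α (piling F (letterInv α :: w)) = piling F w := by
  funext j
  simp only [push, if_pos (canPop_piling_letterInv_cons α w)]
  by_cases hj : Dep F α.1 j
  · have hne : entry F j (letterInv α) ≠ none := entry_eq_none_iff.not.mpr (not_not.mpr hj)
    obtain ⟨e, he⟩ := Option.ne_none_iff_exists'.mp hne
    simp [hj, he]
  · simp [hj, entry_eq_none_iff.mpr (show ¬ Dep F (letterInv α).1 j from hj)]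

lemma push_piling_of_not_canPop {α : Letter k} {u : List (Letter k)}
    (h : ¬ CanPop α (piling F u)) : push F α (piling F u) = piling F (α :: u) := by
  funext j
  simp [push, h]

lemma exists_eq_append_of_canPop {α : Letter k} {u : List (Letter k)}
    (h : CanPop α (piling F u)) :
    ∃ a c, u = a ++ letterInv α :: c ∧ ∀ γ ∈ a, ¬ Dep F α.1 γ.1 := by
  obtain ⟨ys, hys⟩ := List.head?_eq_some_iff.mp h
  obtain ⟨a, β, c, rfl, ha, hβ, -⟩ := List.filterMap_eq_cons_iff.mp hys
  refine ⟨a, c, by rw [eq_of_entry_eq_some_some hβ]; rfl, fun γ hγ hd => ?_⟩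
  exact entry_eq_none_iff.mp (ha γ hγ) hd.symm

lemma exists_push_piling_of_canPop {α : Letter k} {u : List (Letter k)}
    (h : CanPop α (piling F u)) :
    ∃ w, piling F u = piling F (letterInv α :: w) ∧ push F α (piling F u) = piling F w := by
  obtain ⟨a, c, rfl, ha⟩ := exists_eq_append_of_canPop h
  rw [piling_append_cons fun γ hγ => by simpa using ha γ hγ]
  exact ⟨a ++ c, rfl, push_piling_letterInv_cons α _⟩

end Piling

section Action

variable {k : ℕ} {F : Set (Sym2 (Fin k))}

def IsReducedPiling (p : Piling k) : Prop :=
  ∀ i b, ¬ [some b, some !b] <:+: p i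

open Classical in
lemma push_apply (α : Letter k) (p : Piling k) (j : Fin k) :
    push F α p j = if CanPop α p then (if Dep F α.1 j then (p j).tail else p j)
      else (entry F j α).toList ++ p j := by
  unfold push
  by_cases hp : CanPop α p <;> simp [hp]

lemma isReducedPiling_push {p : Piling k} (hp : IsReducedPiling p) (α : Letter k) :
    IsReducedPiling (push F α p) := by
  intro j b h
  rw [push_apply] at h
  split_ifs at h with hpop hj
  · exact hp j b (h.trans (List.tail_suffix _).isInfix)
  · exact hp j b h
  · cases he : entry F j α with
    | none => exact hp j b (by simpa [he] using h)
    | some e =>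
      rw [he, Option.toList_some, List.singleton_append, List.infix_cons_iff,
        List.cons_prefix_cons] at h
      rcases h with ⟨rfl, hpre⟩ | h
      · obtain rfl := eq_of_entry_eq_some_some he
        exact hpop (List.singleton_prefix_iff_head?_eq_some.mp hpre)
      · exact hp j b h

lemma not_canPop_letterInv_push {p : Piling k} (hp : IsReducedPiling p)
    {α : Letter k} (h : CanPop α p) : ¬ CanPop (letterInv α) (push F α p) := by
  intro h'
  have hcol : push F α p α.1 = (p α.1).tail := by rw [push_apply, if_pos h, if_pos (Dep.refl _)]
  obtain ⟨t, ht⟩ := List.head?_eq_some_iff.mp h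
  obtain ⟨s, hs⟩ := List.head?_eq_some_iff.mp h'
  rw [letterInv_fst, hcol, ht, List.tail_cons, letterInv_snd, Bool.not_not] at hs
  exact hp α.1 (!α.2) ⟨[], s, by simp [ht, hs]⟩

lemma push_letterInv_push_piling {u : List (Letter k)} (hu : IsReducedPiling (piling F u))
    (α : Letter k) : push F (letterInv α) (push F α (piling F u)) = piling F u := by
  by_cases hpop : CanPop α (piling F u)
  · obtain ⟨w, hw, hpush⟩ := exists_push_piling_of_canPop hpop
    have hnot := not_canPop_letterInv_push (F := F) hu hpop
    rw [hpush] at hnot ⊢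
    rw [push_piling_of_not_canPop hnot, hw]
  · rw [push_piling_of_not_canPop hpop]
    simpa using push_piling_letterInv_cons (F := F) (letterInv α) u

lemma canPop_push_iff {α β : Letter k} {p : Piling k} (h : ¬ Dep F α.1 β.1) :
    CanPop β (push F α p) ↔ CanPop β p := by
  have hcol : push F α p β.1 = p β.1 := by
    rw [push_apply, entry_eq_none_iff.mpr h]
    split_ifs <;> simp
  rw [CanPop, CanPop, hcol]

lemma piling_eq_none_cons_of_canPop {α : Letter k} {u : List (Letter k)}
    (h : CanPop α (piling F u)) {j : Fin k} (hj : Dep F α.1 j) (hjα : α.1 ≠ j) :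
    piling F u j = none :: (piling F u j).tail := by
  obtain ⟨w, hw, -⟩ := exists_push_piling_of_canPop h
  rw [hw, piling_cons, entry_of_ne (β := letterInv α) hjα hj]
  rfl

lemma push_push_comm {α β : Letter k} (h : ¬ Dep F α.1 β.1) (u : List (Letter k)) :
    push F α (push F β (piling F u)) = push F β (push F α (piling F u)) := by
  have h' : ¬ Dep F β.1 α.1 := mt Dep.symm h
  funext j
  rw [push_apply, push_apply β (push F α _), canPop_push_iff h, canPop_push_iff h']
  simp only [push_apply]
  by_cases hα : Dep F α.1 j <;> by_cases hβ : Dep F β.1 j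
  · have hjα : α.1 ≠ j := fun hj => h' (hj ▸ hβ)
    have hjβ : β.1 ≠ j := fun hj => h (hj ▸ hα)
    rw [entry_of_ne hjα hα, entry_of_ne hjβ hβ]
    by_cases pα : CanPop α (piling F u) <;> by_cases pβ : CanPop β (piling F u) <;>
      simp only [pα, pβ, hα, hβ, if_true, if_false, Option.toList_some, List.singleton_append,
        List.tail_cons]
    · exact piling_eq_none_cons_of_canPop pα hα hjα
    · exact (piling_eq_none_cons_of_canPop pβ hβ hjβ).symm
  · rw [entry_eq_none_iff.mpr hβ]
    split_ifs <;> simp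
  · rw [entry_eq_none_iff.mpr hα]
    split_ifs <;> simp
  · rw [entry_eq_none_iff.mpr hα, entry_eq_none_iff.mpr hβ]
    split_ifs <;> simp

/-- `push α` is a bijection only on reduced pilings, hence the subtype. -/
def ReducedPiling (F : Set (Sym2 (Fin k))) : Type :=
  {p : Piling k // p ∈ Set.range (piling F) ∧ IsReducedPiling p}

lemma push_mem_range (α : Letter k) (u : List (Letter k)) :
    push F α (piling F u) ∈ Set.range (piling F) := by
  by_cases hpop : CanPop α (piling F u)
  · obtain ⟨w, -, hw⟩ := exists_push_piling_of_canPop hpop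
    exact ⟨w, hw.symm⟩
  · exact ⟨α :: u, (push_piling_of_not_canPop hpop).symm⟩

noncomputable def ReducedPiling.push (α : Letter k) (p : ReducedPiling F) : ReducedPiling F :=
  ⟨GraphGroupPaper.push F α p.1, by
    obtain ⟨⟨u, hu⟩, hred⟩ := p.2
    exact ⟨hu ▸ push_mem_range α u, isReducedPiling_push hred α⟩⟩

lemma ReducedPiling.push_letterInv_push (α : Letter k) (p : ReducedPiling F) :
    (p.push α).push (letterInv α) = p := by
  obtain ⟨_, ⟨u, rfl⟩, hred⟩ := p
  exact Subtype.ext (push_letterInv_push_piling hred α)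

noncomputable def pushPerm (F : Set (Sym2 (Fin k))) (α : Letter k) :
    Equiv.Perm (ReducedPiling F) where
  toFun := ReducedPiling.push α
  invFun := ReducedPiling.push (letterInv α)
  left_inv := ReducedPiling.push_letterInv_push α
  right_inv p := by simpa using ReducedPiling.push_letterInv_push (letterInv α) p

lemma commute_pushPerm {α β : Letter k} (h : ¬ Dep F α.1 β.1) :
    Commute (pushPerm F α) (pushPerm F β) := by
  refine Equiv.ext fun p => ?_
  obtain ⟨_, ⟨u, rfl⟩, -⟩ := p
  exact Subtype.ext (push_push_comm h u)

noncomputable def pilingAction : Grp k F →* Equiv.Perm (ReducedPiling F) :=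
  PresentedGroup.toGroup (f := fun i => pushPerm F (i, true)) <| by
    rintro _ ⟨i, j, hij, hF, rfl⟩
    have hc : Commute (pushPerm F (i, true)) (pushPerm F (j, true)) :=
      commute_pushPerm (by simp [Dep, hij, hF])
    simp [hc.eq]

lemma pilingAction_sym (α : Letter k) : pilingAction (sym k F α) = pushPerm F α := by
  rcases α with ⟨i, _ | _⟩
  · rw [sym, if_neg Bool.false_ne_true, map_inv, gen, pilingAction, PresentedGroup.toGroup.of]
    rfl
  · simp [sym, gen, pilingAction]

noncomputable def ReducedPiling.empty : ReducedPiling F :=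
  ⟨piling F [], ⟨[], rfl⟩, fun i b h => by simp at h⟩

lemma pilingAction_wordProd {w : List (Letter k)} (hw : ¬ HasCancellingPair F w) :
    (pilingAction (wordProd k F w) ReducedPiling.empty).1 = piling F w := by
  induction w with
  | nil => rfl
  | cons α t ih =>
    have ht : ¬ HasCancellingPair F t := fun h => hw (by simpa using h.append_left [α])
    have hpop : ¬ CanPop α (piling F t) := by
      intro hpop
      obtain ⟨a, c, rfl, ha⟩ := exists_eq_append_of_canPop hpop
      exact hw ⟨[], α, a, c, ha, by simp⟩
    rw [wordProd_cons, map_mul, Equiv.Perm.mul_apply, pilingAction_sym]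
    change push F α _ = _
    rw [ih ht, push_piling_of_not_canPop hpop]

def pilingSize (p : Piling k) : ℕ := ∑ i, (p i).countP Option.isSome

lemma pilingSize_piling (u : List (Letter k)) : pilingSize (piling F u) = u.length := by
  induction u with
  | nil => simp [pilingSize]
  | cons α u ih =>
    simp only [pilingSize] at ih ⊢
    simp [List.countP_append, Finset.sum_add_distrib, countP_isSome_entry, ih, add_comm]

theorem len_wordProd_of_not_hasCancellingPair {w : List (Letter k)}
    (hw : ¬ HasCancellingPair F w) : len (wordProd k F w) = w.length := by
  obtain ⟨w₀, hw₀⟩ := exists_minWord (wordProd k F w)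
  have hpil : piling F w₀ = piling F w := by
    rw [← pilingAction_wordProd hw, ← pilingAction_wordProd hw₀.not_hasCancellingPair, hw₀.1]
  rw [← hw₀.2, ← pilingSize_piling (F := F), hpil, pilingSize_piling]

end Action

section Segment

variable {k : ℕ} {F : Set (Sym2 (Fin k))}

lemma hasCancellingPair_of_len_lt {w : List (Letter k)} (h : len (wordProd k F w) < w.length) :
    HasCancellingPair F w := by
  by_contra hw
  rw [len_wordProd_of_not_hasCancellingPair hw] at h
  exact lt_irrefl _ h

lemma not_hasCancellingPair_append {x y : Grp k F} {u v : List (Letter k)} (hu : MinWord x u)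
    (hv : MinWord y v) (hxy : len (x * y) = len x + len y) :
    ¬ HasCancellingPair F (u ++ v) := fun h => by
  have := h.len_add_two_le
  rw [wordProd_append, hu.1, hv.1, List.length_append, hu.2, hv.2] at this
  omega

lemma exists_letter_of_len_lt {x y z : Grp k F} (hxy : len (x * y) = len x + len y)
    (hyz : len (y * z) = len y + len z) (hlt : len (x * y * z) < len x + len y + len z) :
    ∃ γ : Letter k, Commute (sym k F γ) y ∧
      len (x * (sym k F γ)⁻¹) < len x ∧ len (sym k F γ * z) < len z := by
  obtain ⟨wx, hwx⟩ := exists_minWord x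
  obtain ⟨wy, hwy⟩ := exists_minWord y
  obtain ⟨wz, hwz⟩ := exists_minWord z
  have hcancel : HasCancellingPair F (wx ++ (wy ++ wz)) := by
    apply hasCancellingPair_of_len_lt
    rw [wordProd_append, wordProd_append, hwx.1, hwy.1, hwz.1, ← mul_assoc]
    simpa [hwx.2, hwy.2, hwz.2, add_assoc] using hlt
  rcases hcancel.of_append with hx | hyz' | ⟨u₁, γ, u₂, v₁, v₂, rfl, hv, hγ⟩
  · exact absurd hx hwx.not_hasCancellingPair
  · exact absurd hyz' (not_hasCancellingPair_append hwy hwz hyz)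
  -- `α⁻¹` cannot lie in `wy`, since `wx ++ wy` has no cancelling pair.
  obtain ⟨t, rfl, rfl⟩ : ∃ t, v₁ = wy ++ t ∧ wz = t ++ letterInv γ :: v₂ := by
    rcases List.append_eq_append_iff.mp hv with ⟨t, hv₁, hwz'⟩ | ⟨t, rfl, ht⟩
    · exact ⟨t, hv₁, hwz'⟩
    rcases List.cons_eq_append_iff.mp ht with ⟨rfl, hwz'⟩ | ⟨t', rfl, -⟩
    · exact ⟨[], by simp, hwz'⟩
    · refine absurd ?_ (not_hasCancellingPair_append hwx hwy hxy)
      exact ⟨u₁, γ, u₂ ++ v₁, t', hγ, by simp⟩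
  have hcomm : ∀ l ⊆ u₂ ++ (wy ++ t), Commute (sym k F γ) (wordProd k F l) := fun l hl =>
    commute_sym_wordProd fun β hβ => hγ β (hl hβ)
  refine ⟨γ, hwy.1 ▸ hcomm wy (by intro β; simp +contextual), ?_, ?_⟩
  · have hx : x * (sym k F γ)⁻¹ = wordProd k F (u₁ ++ u₂) := by
      rw [← hwx.1, wordProd_append, wordProd_append, wordProd_cons,
        (hcomm u₂ (by intro β; simp +contextual)).eq, ← mul_assoc, mul_inv_cancel_right]
    rw [hx, ← hwx.2]
    exact (len_le_length rfl).trans_lt (by simp)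
  · have hz : sym k F γ * z = wordProd k F (t ++ v₂) := by
      rw [← hwz.1, wordProd_append, wordProd_append, wordProd_cons, sym_letterInv, ← mul_assoc,
        ← mul_assoc, (hcomm t (by intro β; simp +contextual)).eq, mul_inv_cancel_right]
    rw [hz, ← hwz.2]
    exact (len_le_length rfl).trans_lt (by simp)

lemma len_mul_eq_of_len_mul_inv_lt {x y : Grp k F} {γ : Letter k}
    (hxy : len (x * y) = len x + len y) (hc : Commute (sym k F γ) y)
    (hlt : len (x * (sym k F γ)⁻¹) < len x) :
    len (x * (sym k F γ)⁻¹ * y) = len (x * (sym k F γ)⁻¹) + len y := by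
  have hx : x * y = x * (sym k F γ)⁻¹ * y * sym k F γ := by
    rw [mul_assoc _ y, ← hc.eq, ← mul_assoc, inv_mul_cancel_right]
  have h₁ := len_mul_le (x * (sym k F γ)⁻¹ * y) (sym k F γ)
  have h₂ := len_mul_le (x * (sym k F γ)⁻¹) y
  have h₃ := len_sym_le_one (F := F) γ
  rw [← hx] at h₁
  omega

lemma len_mul_eq_of_len_mul_lt {y z : Grp k F} {γ : Letter k}
    (hyz : len (y * z) = len y + len z) (hc : Commute (sym k F γ) y)
    (hlt : len (sym k F γ * z) < len z) :
    len (y * (sym k F γ * z)) = len y + len (sym k F γ * z) := by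
  have hz : y * z = sym k F (letterInv γ) * (y * (sym k F γ * z)) := by
    rw [sym_letterInv, ← mul_assoc, hc.inv_left.eq, mul_assoc, inv_mul_cancel_left]
  have h₁ := len_mul_le (sym k F (letterInv γ)) (y * (sym k F γ * z))
  have h₂ := len_mul_le y (sym k F γ * z)
  have h₃ := len_sym_le_one (F := F) (letterInv γ)
  rw [← hz] at h₁
  omega

end Segment

theorem stmt0_general {k : ℕ} {F : Set (Sym2 (Fin k))} (x y z : Grp k F)
    (hxy : len (x * y) = len x + len y)
    (hyz : len (y * z) = len y + len z) :
    Segment y (x * y * z) := by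
  induction hn : len x + len z using Nat.strong_induction_on generalizing x z with
  | _ n ih =>
    have hle : len (x * y * z) ≤ len x + len y + len z :=
      (len_mul_le _ z).trans (Nat.add_le_add_right (len_mul_le x y) _)
    rcases hle.eq_or_lt with heq | hlt
    · exact ⟨x, z, rfl, heq⟩
    obtain ⟨γ, hc, hx, hz⟩ := exists_letter_of_len_lt hxy hyz hlt
    have hxyz : x * (sym k F γ)⁻¹ * y * (sym k F γ * z) = x * y * z := by
      rw [← mul_assoc, mul_assoc _ y, ← hc.eq, ← mul_assoc, inv_mul_cancel_right]
    rw [← hxyz]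
    exact ih _ (by omega) _ _ (len_mul_eq_of_len_mul_inv_lt hxy hc hx)
      (len_mul_eq_of_len_mul_lt hyz hc hz) rfl

/-- if `xy = x·y` and `yz = y·z`, then `y` is a segment of `xyz`. -/
theorem stmt0 {k : ℕ} (hk : 1 ≤ k) {F : Set (Sym2 (Fin k))} (x y z : Grp k F)
    (hxy : len (x * y) = len x + len y)
    (hyz : len (y * z) = len y + len z) :
    Segment y (x * y * z) :=
  stmt0_general x y z hxy hyz

end GraphGroupPaper
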